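/- arXiv:2103.12200 — 5 statements merged into one kernel-verified Lean document; each statement's English description precedes it below -/
import Mathlib

section
/- Let (Ω, 𝒜, μ) be a probability space and {E_i}_{i∈ℕ} a sequence of measurable sets. Suppose ∑_{i=1}^∞ μ(E_i) = ∞ and ∑_{s,t=1}^Q μ(E_s ∩ E_t) ≤ (∑_{s=1}^Q μ(E_s))² holds for infinitely many Q ∈ ℕ. Then μ(limsup_{i→∞} E_i) = 1. -/
/-!
Write `S Q = ∑_{i<Q} μ(E i)`. Cauchy–Schwarz applied to the counting function `∑_{N≤i<Q} 1_{E i}`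
and the indicator of `⋃_{N≤i<Q} E i` (the Chung–Erdős inequality) bounds `(S Q - S N)²` by
`∑_{s,t<Q} μ(E s ∩ E t) · μ(⋃_{i≥N} E i)`, hence by `S Q² · μ(⋃_{i≥N} E i)` for the infinitely
many good `Q`. As `S Q → ∞`, the ratio `(S Q - S N)² / S Q²` tends to `1`, so every tail union
`⋃_{i≥N} E i` has full measure, and so does their decreasing intersection, the limsup set.
-/

open MeasureTheory Filter Set
open scoped ENNReal Topology

theorem ENNReal.one_le_of_frequently_sq_tsub_le {ι : Type*} {l : Filter ι} {s : ι → ℝ≥0∞}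
    (hs : Tendsto s l (𝓝 ∞)) (hfin : ∀ i, s i ≠ ∞) {a m : ℝ≥0∞} (ha : a ≠ ∞)
    (h : ∃ᶠ i in l, (s i - a) ^ 2 ≤ s i ^ 2 * m) : 1 ≤ m := by
  have hlim : Tendsto (fun i => (1 - a / s i) ^ 2) l (𝓝 1) := by
    have h_ratio := ENNReal.Tendsto.const_div hs (Or.inr ha)
    simpa using ENNReal.Tendsto.pow (n := 2) <|
      ENNReal.Tendsto.sub tendsto_const_nhds h_ratio (Or.inl ENNReal.one_ne_top)
  refine le_of_tendsto_of_frequently hlim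
    ((h.and_eventually (hs.eventually_ne ENNReal.top_ne_zero)).mono ?_)
  rintro i ⟨hi, hi0⟩
  have hsq0 : s i ^ 2 ≠ 0 := pow_ne_zero _ hi0
  have hsqtop : s i ^ 2 ≠ ∞ := ENNReal.pow_ne_top (hfin i)
  have h_factor : (1 - a / s i) ^ 2 * s i ^ 2 = (s i - a) ^ 2 := by
    rw [← mul_pow, ENNReal.sub_mul fun _ _ => hfin i, one_mul,
      ENNReal.div_mul_cancel hi0 (hfin i)]
  rw [← ENNReal.mul_le_mul_iff_left hsq0 hsqtop, h_factor, mul_comm]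
  exact hi

theorem ENNReal.sq_lintegral_mul_le {α : Type*} [MeasurableSpace α] (μ : Measure α)
    {f g : α → ℝ≥0∞} (hf : AEMeasurable f μ) (hg : AEMeasurable g μ) :
    (∫⁻ x, f x * g x ∂μ) ^ 2 ≤ (∫⁻ x, f x ^ 2 ∂μ) * ∫⁻ x, g x ^ 2 ∂μ := by
  have h := ENNReal.lintegral_mul_le_Lp_mul_Lq μ Real.HolderConjugate.two_two hf hg
  simp only [Pi.mul_apply, ENNReal.rpow_two] at h
  calc (∫⁻ x, f x * g x ∂μ) ^ 2
      ≤ ((∫⁻ x, f x ^ 2 ∂μ) ^ (1 / 2 : ℝ) * (∫⁻ x, g x ^ 2 ∂μ) ^ (1 / 2 : ℝ)) ^ 2 :=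
        pow_le_pow_left₀ zero_le h 2
    _ = (∫⁻ x, f x ^ 2 ∂μ) * ∫⁻ x, g x ^ 2 ∂μ := by
        rw [mul_pow, ← ENNReal.rpow_natCast, ← ENNReal.rpow_natCast (_ ^ _),
          ← ENNReal.rpow_mul, ← ENNReal.rpow_mul]
        norm_num

theorem sq_sum_measure_le_sum_measure_inter_mul_measure_biUnion {ι Ω : Type*}
    [MeasurableSpace Ω] (μ : Measure Ω) {E : ι → Set Ω} (hE : ∀ i, MeasurableSet (E i))
    (F : Finset ι) :
    (∑ i ∈ F, μ (E i)) ^ 2 ≤ (∑ s ∈ F, ∑ t ∈ F, μ (E s ∩ E t)) * μ (⋃ i ∈ F, E i) := by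
  set U := ⋃ i ∈ F, E i
  have hU : MeasurableSet U := F.measurableSet_biUnion fun i _ => hE i
  set count : Ω → ℝ≥0∞ := fun x => ∑ i ∈ F, (E i).indicator 1 x
  have indicator_mul : ∀ (A B : Set Ω) x,
      A.indicator (1 : Ω → ℝ≥0∞) x * B.indicator 1 x = (A ∩ B).indicator 1 x :=
    fun A B x => (congrFun inter_indicator_one x).symm
  have hcount : Measurable count :=
    Finset.measurable_sum F fun i _ => measurable_one.indicator (hE i)
  have h_mul : ∫⁻ x, count x * U.indicator 1 x ∂μ = ∑ i ∈ F, μ (E i) := by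
    simp only [count, Finset.sum_mul, indicator_mul]
    rw [lintegral_finsetSum _ fun i _ => measurable_one.indicator ((hE i).inter hU)]
    refine Finset.sum_congr rfl fun i hi => ?_
    rw [inter_eq_left.2 (Finset.subset_set_biUnion_of_mem hi), lintegral_indicator_one (hE i)]
  have h_count_sq : ∫⁻ x, count x ^ 2 ∂μ = ∑ s ∈ F, ∑ t ∈ F, μ (E s ∩ E t) := by
    simp only [count, sq, Finset.sum_mul_sum, indicator_mul]
    rw [lintegral_finsetSum _ fun s _ => Finset.measurable_sum _ fun t _ =>
      measurable_one.indicator ((hE s).inter (hE t))]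
    refine Finset.sum_congr rfl fun s _ => ?_
    rw [lintegral_finsetSum _ fun t _ => measurable_one.indicator ((hE s).inter (hE t))]
    exact Finset.sum_congr rfl fun t _ => lintegral_indicator_one ((hE s).inter (hE t))
  have h_U_sq : ∫⁻ x, U.indicator 1 x ^ 2 ∂μ = μ U := by
    simp only [sq, indicator_mul, inter_self, lintegral_indicator_one hU]
  calc (∑ i ∈ F, μ (E i)) ^ 2 = (∫⁻ x, count x * U.indicator 1 x ∂μ) ^ 2 := by rw [h_mul]
    _ ≤ (∫⁻ x, count x ^ 2 ∂μ) * ∫⁻ x, U.indicator 1 x ^ 2 ∂μ :=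
      ENNReal.sq_lintegral_mul_le μ hcount.aemeasurable (measurable_one.indicator hU).aemeasurable
    _ = _ := by rw [h_count_sq, h_U_sq]

theorem sq_sum_range_tsub_le_mul_measure_iUnion_ge {Ω : Type*} [MeasurableSpace Ω]
    (μ : Measure Ω) {E : ℕ → Set Ω} (hE : ∀ i, MeasurableSet (E i)) {N Q : ℕ} (hNQ : N ≤ Q) :
    (∑ i ∈ Finset.range Q, μ (E i) - ∑ i ∈ Finset.range N, μ (E i)) ^ 2
      ≤ (∑ s ∈ Finset.range Q, ∑ t ∈ Finset.range Q, μ (E s ∩ E t)) * μ (⋃ i ≥ N, E i) := by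
  have h_sum : ∑ i ∈ Finset.range Q, μ (E i) - ∑ i ∈ Finset.range N, μ (E i)
      ≤ ∑ i ∈ Finset.Ico N Q, μ (E i) :=
    tsub_le_iff_left.2 (Finset.sum_range_add_sum_Ico _ hNQ).ge
  have h_inter : ∑ s ∈ Finset.Ico N Q, ∑ t ∈ Finset.Ico N Q, μ (E s ∩ E t)
      ≤ ∑ s ∈ Finset.range Q, ∑ t ∈ Finset.range Q, μ (E s ∩ E t) := by
    have h_sub : Finset.Ico N Q ⊆ Finset.range Q := by
      rw [Finset.range_eq_Ico]; exact Finset.Ico_subset_Ico_left (Nat.zero_le N)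
    exact (Finset.sum_le_sum fun s _ => Finset.sum_le_sum_of_subset h_sub).trans
      (Finset.sum_le_sum_of_subset h_sub)
  have h_union : ⋃ i ∈ Finset.Ico N Q, E i ⊆ ⋃ i ≥ N, E i :=
    biUnion_mono (fun i hi => (Finset.mem_Ico.1 hi).1) fun _ _ => subset_rfl
  calc _ ≤ (∑ i ∈ Finset.Ico N Q, μ (E i)) ^ 2 := by gcongr
    _ ≤ _ := sq_sum_measure_le_sum_measure_inter_mul_measure_biUnion μ hE _
    _ ≤ _ := by gcongr

theorem measure_limsup_atTop_eq_one {Ω : Type*} [MeasurableSpace Ω] {μ : Measure Ω}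
    {s : ℕ → Set Ω} (hs : ∀ i, MeasurableSet (s i)) (h : ∀ N, μ (⋃ i ≥ N, s i) = 1) :
    μ (limsup s atTop) = 1 := by
  have h_anti : Antitone fun N => ⋃ i ≥ N, s i :=
    fun _ _ hNM => biUnion_mono (fun _ hi => le_trans hNM hi) fun _ _ => subset_rfl
  have h_meas : ∀ N, MeasurableSet (⋃ i ≥ N, s i) :=
    fun N => .iUnion fun i => .iUnion fun _ => hs i
  rw [limsup_eq_iInf_iSup_of_nat]
  simp only [iInf_eq_iInter, iSup_eq_iUnion]
  rw [h_anti.measure_iInter (fun N => (h_meas N).nullMeasurableSet)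
    ⟨0, ne_of_eq_of_ne (h 0) ENNReal.one_ne_top⟩]
  simp only [h, iInf_const]

/-- **Divergence Borel–Cantelli Lemma (full measure case).** If the measures of the sets
`E i` sum to infinity and the quasi-independence-on-average condition holds with constant `1`
for infinitely many `Q`, then the limsup set has full measure. -/
theorem divergence_borel_cantelli_full
    {Ω : Type*} [MeasurableSpace Ω] (μ : Measure Ω) [IsProbabilityMeasure μ]
    (E : ℕ → Set Ω) (hE : ∀ i, MeasurableSet (E i))
    (hdiv : ∑' i, μ (E i) = ⊤)
    (hQI : ∃ᶠ Q in atTop,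
      ∑ s ∈ Finset.range Q, ∑ t ∈ Finset.range Q, μ (E s ∩ E t)
        ≤ (∑ s ∈ Finset.range Q, μ (E s)) ^ 2) :
    μ (limsup E atTop) = 1 := by
  have h_fin : ∀ Q, ∑ i ∈ Finset.range Q, μ (E i) ≠ ∞ :=
    fun Q => ENNReal.sum_ne_top.2 fun i _ => measure_ne_top μ (E i)
  have h_lim : Tendsto (fun Q => ∑ i ∈ Finset.range Q, μ (E i)) atTop (𝓝 ∞) :=
    hdiv ▸ ENNReal.tendsto_nat_tsum _
  refine measure_limsup_atTop_eq_one hE fun N => le_antisymm prob_le_one ?_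
  refine ENNReal.one_le_of_frequently_sq_tsub_le h_lim h_fin (h_fin N) ?_
  refine (hQI.and_eventually (eventually_ge_atTop N)).mono fun Q ⟨hQ, hNQ⟩ => ?_
  exact (sq_sum_range_tsub_le_mul_measure_iUnion_ge μ hE hNQ).trans (mul_le_mul_left hQ _)
end

section
/- Let (Ω, 𝒜, μ, d) be a metric measure space equipped with a Borel probability measure μ, and let {E_i}_{i∈ℕ} be a sequence of Borel subsets of Ω. Suppose there exists an increasing function f : (0,∞) → (0,∞) with f(x) → 0 as x → 0 such that for every open set A ⊆ Ω with μ(A) > 0 there is a sequence {L_{i,A}}_{i∈ℕ} of measurable sets with L_{i,A} ⊆ E_i ∩ A for every i, ∑_{i=1}^∞ μ(L_{i,A}) = ∞, and ∑_{s,t=1}^Q μ(L_{s,A} ∩ L_{t,A}) ≤ (1/f(μ(A))) (∑_{s=1}^Q μ(L_{s,A}))² for infinitely many Q ∈ ℕ. Then μ(limsup_{i→∞} E_i) = 1. -/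
/-!
The Chung–Erdős inequality `(∑ μ Lᵢ)² ≤ μ (⋃ Lᵢ) * ∑ μ (Lₛ ∩ Lₜ)`, which is Cauchy–Schwarz for
`∑ 𝟙_{Lᵢ}`, applied to the blocks `L_n, …, L_{Q-1}` for the good `Q` shows that every tail union
`⋃_{i ≥ n} Lᵢ` has measure at least `f (μ A)`: since `∑ μ Lᵢ` diverges, the first `n` terms are
negligible. Hence `μ (A ∩ limsup E) ≥ f (μ A)` for every open `A` of positive measure. If the
complement of `limsup E` had positive measure, outer regularity would give an open
`A ⊇ (limsup E)ᶜ` exceeding it in measure by less than `f (μ (limsup E)ᶜ) ≤ f (μ A)`.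
-/

open MeasureTheory Filter Set Function
open scoped ENNReal Topology

section

variable {α : Type*} [MeasurableSpace α] {μ : Measure α}

theorem lintegral_sq_le_measure_mul_lintegral_sq {g : α → ℝ≥0∞} (hg : AEMeasurable g μ)
    {U : Set α} (hgU : support g ⊆ U) :
    (∫⁻ x, g x ∂μ) ^ 2 ≤ μ U * ∫⁻ x, g x ^ 2 ∂μ := by
  have holder := ENNReal.lintegral_mul_le_Lp_mul_Lq (μ.restrict U) Real.HolderConjugate.two_two
    aemeasurable_const hg.restrict (f := 1)
  simp only [Pi.one_apply, one_mul, lintegral_const, Measure.restrict_apply_univ, one_pow,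
    ENNReal.rpow_two, setLIntegral_eq_of_support_subset hgU] at holder
  calc (∫⁻ x, g x ∂μ) ^ 2 ≤ ((μ U) ^ (1 / 2 : ℝ) * (∫⁻ x in U, g x ^ 2 ∂μ) ^ (1 / 2 : ℝ)) ^ 2 := by
        gcongr
    _ ≤ ((μ U) ^ (1 / 2 : ℝ) * (∫⁻ x, g x ^ 2 ∂μ) ^ (1 / 2 : ℝ)) ^ 2 := by
        gcongr
        exact Measure.restrict_le_self
    _ = μ U * ∫⁻ x, g x ^ 2 ∂μ := by
        rw [mul_pow, ← ENNReal.rpow_two, ← ENNReal.rpow_two, one_div,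
          ENNReal.rpow_inv_rpow two_ne_zero, ENNReal.rpow_inv_rpow two_ne_zero]

theorem sq_sum_measure_le_measure_biUnion_mul_sum_sum_inter {ι : Type*} {L : ι → Set α}
    (hL : ∀ i, MeasurableSet (L i)) (s : Finset ι) :
    (∑ i ∈ s, μ (L i)) ^ 2 ≤ μ (⋃ i ∈ s, L i) * ∑ i ∈ s, ∑ j ∈ s, μ (L i ∩ L j) := by
  set g : α → ℝ≥0∞ := fun x ↦ ∑ i ∈ s, (L i).indicator 1 x
  have hg_sq (x : α) : g x ^ 2 = ∑ i ∈ s, ∑ j ∈ s, (L i ∩ L j).indicator 1 x := by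
    simp only [g, sq, Finset.sum_mul_sum, inter_indicator_one, Pi.mul_apply]
  have hg_support : support g ⊆ ⋃ i ∈ s, L i := by
    intro x hx
    obtain ⟨i, hi, hxi⟩ := Finset.exists_ne_zero_of_sum_ne_zero hx
    exact mem_biUnion hi (mem_of_indicator_ne_zero hxi)
  have h_int : ∫⁻ x, g x ∂μ = ∑ i ∈ s, μ (L i) := by
    rw [lintegral_finsetSum' _ fun i _ ↦ by fun_prop (disch := measurability)]
    simp [hL]
  have h_int_sq : ∫⁻ x, g x ^ 2 ∂μ = ∑ i ∈ s, ∑ j ∈ s, μ (L i ∩ L j) := by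
    simp_rw [hg_sq]
    rw [lintegral_finsetSum' _ fun i _ ↦ by fun_prop (disch := measurability)]
    refine Finset.sum_congr rfl fun i _ ↦ ?_
    rw [lintegral_finsetSum' _ fun j _ ↦ by fun_prop (disch := measurability)]
    simp [(hL i).inter (hL _)]
  rw [← h_int, ← h_int_sq]
  exact lintegral_sq_le_measure_mul_lintegral_sq (by fun_prop (disch := measurability)) hg_support

theorem sq_sum_measureReal_le_measureReal_biUnion_mul_sum_sum_inter [IsFiniteMeasure μ]
    {ι : Type*} {L : ι → Set α} (hL : ∀ i, MeasurableSet (L i)) (s : Finset ι) :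
    (∑ i ∈ s, μ.real (L i)) ^ 2
      ≤ μ.real (⋃ i ∈ s, L i) * ∑ i ∈ s, ∑ j ∈ s, μ.real (L i ∩ L j) := by
  have h := ENNReal.toReal_mono (ENNReal.mul_ne_top (measure_ne_top _ _)
    (ENNReal.sum_ne_top.2 fun _ _ ↦ ENNReal.sum_ne_top.2 fun _ _ ↦ measure_ne_top _ _))
    (sq_sum_measure_le_measure_biUnion_mul_sum_sum_inter hL s (μ := μ))
  simpa [measureReal_def, ENNReal.toReal_sum, ENNReal.toReal_mul, ENNReal.toReal_pow] using h

theorem sq_sum_Ico_measureReal_le_measureReal_iUnion_mul [IsFiniteMeasure μ] {L : ℕ → Set α}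
    (hL : ∀ i, MeasurableSet (L i)) (n Q : ℕ) :
    (∑ i ∈ Finset.Ico n Q, μ.real (L i)) ^ 2
      ≤ μ.real (⋃ i ≥ n, L i) * ∑ i ∈ Finset.range Q, ∑ j ∈ Finset.range Q, μ.real (L i ∩ L j) := by
  have hIco : Finset.Ico n Q ⊆ Finset.range Q := fun i hi ↦
    Finset.mem_range.mpr (Finset.mem_Ico.mp hi).2
  calc (∑ i ∈ Finset.Ico n Q, μ.real (L i)) ^ 2
      ≤ μ.real (⋃ i ∈ Finset.Ico n Q, L i)
          * ∑ i ∈ Finset.Ico n Q, ∑ j ∈ Finset.Ico n Q, μ.real (L i ∩ L j) :=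
        sq_sum_measureReal_le_measureReal_biUnion_mul_sum_sum_inter hL _
    _ ≤ μ.real (⋃ i ≥ n, L i)
          * ∑ i ∈ Finset.range Q, ∑ j ∈ Finset.range Q, μ.real (L i ∩ L j) := by
        gcongr ?_ * ?_
        · exact measureReal_mono (iUnion₂_mono' fun i hi ↦
            ⟨i, (Finset.mem_Ico.mp hi).1, subset_rfl⟩) (measure_ne_top _ _)
        · calc _ ≤ ∑ i ∈ Finset.Ico n Q, ∑ j ∈ Finset.range Q, μ.real (L i ∩ L j) := by gcongr
            _ ≤ _ := Finset.sum_le_sum_of_subset_of_nonneg hIco fun _ _ _ ↦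
                Finset.sum_nonneg fun _ _ ↦ measureReal_nonneg

theorem le_of_frequently_mul_sub_sq_le {ι : Type*} {l : Filter ι} {a : ι → ℝ}
    (ha : Tendsto a l atTop) {b c m : ℝ} (h : ∃ᶠ i in l, c * (a i - b) ^ 2 ≤ m * a i ^ 2) :
    c ≤ m := by
  have hlim : Tendsto (fun i ↦ c * (1 - b / a i) ^ 2) l (𝓝 c) := by
    simpa using (((tendsto_const_nhds (x := (1 : ℝ))).sub
      ((tendsto_const_nhds (x := b)).div_atTop ha)).pow 2).const_mul c
  refine le_of_tendsto_of_frequently hlim ((h.and_eventually (ha.eventually_gt_atTop 0)).mono ?_)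
  rintro i ⟨hi, hai⟩
  rwa [one_sub_div hai.ne', div_pow, ← mul_div_assoc, div_le_iff₀ (by positivity)]

theorem tendsto_sum_range_measureReal_atTop [IsFiniteMeasure μ] {L : ℕ → Set α}
    (hdiv : ∑' i, μ (L i) = ∞) :
    Tendsto (fun Q ↦ ∑ i ∈ Finset.range Q, μ.real (L i)) atTop atTop := by
  refine (not_summable_iff_tendsto_nat_atTop_of_nonneg fun _ ↦ measureReal_nonneg).mp fun hs ↦ ?_
  have h_eq : ∑' i, μ (L i) = ENNReal.ofReal (∑' i, μ.real (L i)) := by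
    rw [ENNReal.ofReal_tsum_of_nonneg (fun _ ↦ measureReal_nonneg) hs]
    exact tsum_congr fun i ↦ (ofReal_measureReal).symm
  exact ENNReal.ofReal_ne_top (h_eq ▸ hdiv)

theorem ofReal_le_measure_limsup_of_frequently_sum_inter_le [IsFiniteMeasure μ]
    {L : ℕ → Set α} (hL : ∀ i, MeasurableSet (L i)) (hdiv : ∑' i, μ (L i) = ∞)
    {c : ℝ} (hc : 0 < c)
    (hfreq : ∃ᶠ Q in atTop,
      ∑ s ∈ Finset.range Q, ∑ t ∈ Finset.range Q, μ (L s ∩ L t)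
        ≤ ENNReal.ofReal (1 / c) * (∑ s ∈ Finset.range Q, μ (L s)) ^ 2) :
    ENNReal.ofReal c ≤ μ (limsup L atTop) := by
  set a : ℕ → ℝ := fun Q ↦ ∑ i ∈ Finset.range Q, μ.real (L i)
  have htail (n : ℕ) : c ≤ μ.real (⋃ i ≥ n, L i) := by
    refine le_of_frequently_mul_sub_sq_le (tendsto_sum_range_measureReal_atTop hdiv) (b := a n)
      ((hfreq.and_eventually (eventually_ge_atTop n)).mono ?_)
    rintro Q ⟨hQ, hnQ⟩
    have hQ_real : ∑ i ∈ Finset.range Q, ∑ j ∈ Finset.range Q, μ.real (L i ∩ L j)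
        ≤ 1 / c * a Q ^ 2 := by
      have := ENNReal.toReal_mono (ENNReal.mul_ne_top ENNReal.ofReal_ne_top
        (ENNReal.pow_ne_top (ENNReal.sum_ne_top.2 fun _ _ ↦ measure_ne_top _ _))) hQ
      simpa [a, measureReal_def, ENNReal.toReal_sum, ENNReal.toReal_mul, ENNReal.toReal_pow,
        hc.le] using this
    rw [← Finset.sum_Ico_eq_sub _ hnQ]
    calc c * (∑ i ∈ Finset.Ico n Q, μ.real (L i)) ^ 2
        ≤ c * (μ.real (⋃ i ≥ n, L i) * (1 / c * a Q ^ 2)) := by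
          gcongr
          exact (sq_sum_Ico_measureReal_le_measureReal_iUnion_mul hL n Q).trans (by gcongr)
      _ = μ.real (⋃ i ≥ n, L i) * a Q ^ 2 := by field_simp
  have hanti : Antitone fun n ↦ ⋃ i ≥ n, L i := fun m n hmn ↦
    iUnion₂_mono' fun i hi ↦ ⟨i, hmn.trans hi, subset_rfl⟩
  simp only [limsup_eq_iInf_iSup_of_nat, iInf_eq_iInter, iSup_eq_iUnion]
  rw [hanti.measure_iInter
    (fun n ↦ (MeasurableSet.biUnion (to_countable _) fun i _ ↦ hL i).nullMeasurableSet)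
    ⟨0, measure_ne_top _ _⟩]
  exact le_iInf fun n ↦
    (ENNReal.ofReal_le_ofReal (htail n)).trans_eq (ofReal_measureReal (measure_ne_top _ _))

theorem measure_compl_eq_zero_of_forall_isOpen_le_measure_inter [TopologicalSpace α]
    [IsFiniteMeasure μ] [μ.OuterRegular] {S : Set α} (hS : MeasurableSet S) {g : ℝ → ℝ}
    (hg_pos : ∀ x, 0 < x → 0 < g x) (hg_mono : MonotoneOn g (Ioi 0))
    (h : ∀ A, IsOpen A → 0 < μ A → ENNReal.ofReal (g (μ.real A)) ≤ μ (A ∩ S)) :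
    μ Sᶜ = 0 := by
  by_contra hne
  have hpos : 0 < μ.real Sᶜ := ENNReal.toReal_pos hne (measure_ne_top _ _)
  obtain ⟨A, hSA, hA, hμA⟩ := Sᶜ.exists_isOpen_lt_of_lt _
    (ENNReal.lt_add_right (measure_ne_top μ Sᶜ) (ENNReal.ofReal_pos.mpr (hg_pos _ hpos)).ne')
  have hApos : 0 < μ A := (pos_iff_ne_zero.mpr hne).trans_le (measure_mono hSA)
  have hgA : g (μ.real Sᶜ) ≤ g (μ.real A) :=
    hg_mono hpos (hpos.trans_le (measureReal_mono hSA)) (measureReal_mono hSA)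
  have hsplit : μ (A ∩ S) + μ Sᶜ = μ A := by
    rw [← measure_inter_add_sdiff A hS, sdiff_eq, inter_eq_right.mpr hSA]
  refine hμA.not_ge ?_
  rw [← hsplit, add_comm]
  gcongr
  exact (ENNReal.ofReal_le_ofReal hgA).trans (h A hA hApos)

end

theorem local_divergence_borel_cantelli_general
    {Ω : Type*} [MetricSpace Ω] [MeasurableSpace Ω] [BorelSpace Ω]
    (μ : Measure Ω) [IsProbabilityMeasure μ]
    (E : ℕ → Set Ω) (hE : ∀ i, MeasurableSet (E i))
    (f : ℝ → ℝ)
    (hf_pos : ∀ x : ℝ, 0 < x → 0 < f x)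
    (hf_mono : MonotoneOn f (Set.Ioi (0 : ℝ)))
    (h : ∀ A : Set Ω, IsOpen A → 0 < μ A →
      ∃ L : ℕ → Set Ω,
        (∀ i, MeasurableSet (L i)) ∧
        (∀ i, L i ⊆ E i ∩ A) ∧
        (∑' i, μ (L i) = ⊤) ∧
        ∃ᶠ Q in atTop,
          ∑ s ∈ Finset.range Q, ∑ t ∈ Finset.range Q, μ (L s ∩ L t)
            ≤ ENNReal.ofReal (1 / f (μ A).toReal) *
                (∑ s ∈ Finset.range Q, μ (L s)) ^ 2) :
    μ (limsup E atTop) = 1 := by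
  have hS : MeasurableSet (limsup E atTop) := .measurableSet_limsup hE
  rw [← prob_compl_eq_zero_iff hS]
  refine measure_compl_eq_zero_of_forall_isOpen_le_measure_inter hS hf_pos hf_mono
    fun A hA hApos ↦ ?_
  obtain ⟨L, hL, hLE, hdiv, hfreq⟩ := h A hA hApos
  have hsub : limsup L atTop ⊆ A ∩ limsup E atTop := fun x hx ↦ by
    rw [mem_limsup_iff_frequently_mem] at hx
    obtain ⟨i, hi⟩ := hx.exists
    exact ⟨(hLE i hi).2, mem_limsup_iff_frequently_mem.mpr (hx.mono fun j hj ↦ (hLE j hj).1)⟩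
  exact (ofReal_le_measure_limsup_of_frequently_sum_inter_le hL hdiv
    (hf_pos _ (ENNReal.toReal_pos hApos.ne' (measure_ne_top _ _))) hfreq).trans
    (measure_mono hsub)

/-- **Local divergence Borel–Cantelli Lemma (general form).** Suppose there is an increasing
function `f : (0,∞) → (0,∞)` with `f(x) → 0` as `x → 0` such that inside every open set `A` of
positive measure one can find sets `L i ⊆ E i ∩ A` whose measures sum to infinity and which are
quasi-independent on average with constant `1 / f(μ A)`.  Then the limsup of the `E i` has full
measure. -/
theorem local_divergence_borel_cantelli
    {Ω : Type*} [MetricSpace Ω] [MeasurableSpace Ω] [BorelSpace Ω]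
    (μ : Measure Ω) [IsProbabilityMeasure μ]
    (E : ℕ → Set Ω) (hE : ∀ i, MeasurableSet (E i))
    (f : ℝ → ℝ)
    (hf_pos : ∀ x : ℝ, 0 < x → 0 < f x)
    (hf_mono : MonotoneOn f (Set.Ioi (0 : ℝ)))
    (hf_lim : Tendsto f (nhdsWithin 0 (Set.Ioi (0 : ℝ))) (nhds 0))
    (h : ∀ A : Set Ω, IsOpen A → 0 < μ A →
      ∃ L : ℕ → Set Ω,
        (∀ i, MeasurableSet (L i)) ∧
        (∀ i, L i ⊆ E i ∩ A) ∧
        (∑' i, μ (L i) = ⊤) ∧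
        ∃ᶠ Q in atTop,
          ∑ s ∈ Finset.range Q, ∑ t ∈ Finset.range Q, μ (L s ∩ L t)
            ≤ ENNReal.ofReal (1 / f (μ A).toReal) *
                (∑ s ∈ Finset.range Q, μ (L s)) ^ 2) :
    μ (limsup E atTop) = 1 :=
  local_divergence_borel_cantelli_general μ E hE f hf_pos hf_mono h
end

section
/- Let (Ω, 𝒜, μ, d) be a metric measure space with a doubling Borel probability measure μ with doubling constant λ. Let {B_i}_{i∈ℕ} be a sequence of balls in Ω with diam(B_i) → 0 as i → ∞ satisfying condition (†) with constants a, b > 1. If μ(limsup_{i→∞} B_i ∩ B) = μ(B) for every ball B in Ω, then for every ball B centred in supp μ and every G ∈ ℕ there is a finite subcollection 𝒦_{G,B} ⊆ {B_i : i ≥ G} of pairwise disjoint balls contained in B such that μ(⋃_{L∈𝒦_{G,B}} L) ≥ κ μ(B), where κ := 1/(2 λ^{k+1} b) and k := max{1, ⌈log₂(6/(a−1))⌉}. -/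
/-!
Almost every point of `B(y, ρ)` lies in infinitely many `Bᵢ`, and since the radii shrink, the
points of `limsup Bᵢ` outside the support form a null set; so the balls `Bᵢ ⊆ B(y, ρ)` of large
index meeting `supp μ` cover `B(y, ρ)` up to a null set. The Vitali lemma extracts a disjoint
subfamily whose fivefold enlargements still cover. If `Bᵢ = B(xᵢ, rᵢ)` meets the support at `z`,
then `5Bᵢ ⊆ B(z, 2ᵏ(a-1)rᵢ)` because `2ᵏ(a-1) ≥ 6`, while `B(z, (a-1)rᵢ) ⊆ aBᵢ`; so `k`
doublings and (†) give `μ(5Bᵢ) ≤ λᵏ b μ(Bᵢ)`. The disjoint subfamily therefore has measure at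
least `μ(B)/(λᵏ b) > κ μ(B)`, and so does a finite part of it.
-/

open MeasureTheory Filter Set Metric
open scoped ENNReal

def measSupp {Ω : Type*} [PseudoMetricSpace Ω] [MeasurableSpace Ω]
    (μ : MeasureTheory.Measure Ω) : Set Ω :=
  {x | ∀ ε : ℝ, 0 < ε → 0 < μ (Metric.ball x ε)}

lemma le_two_pow_mul_of_ceil_logb_le {c ε : ℝ} {k : ℕ} (hc : 0 < c) (hε : 0 < ε)
    (hk : ⌈Real.logb 2 (c / ε)⌉.toNat ≤ k) : c ≤ 2 ^ k * ε := by
  have hlog : Real.logb 2 (c / ε) ≤ k :=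
    calc Real.logb 2 (c / ε) ≤ ⌈Real.logb 2 (c / ε)⌉ := Int.le_ceil _
      _ ≤ (⌈Real.logb 2 (c / ε)⌉.toNat : ℤ) := by exact_mod_cast Int.self_le_toNat _
      _ ≤ k := by exact_mod_cast hk
  rw [Real.logb_le_iff_le_rpow one_lt_two (by positivity), Real.rpow_natCast,
    div_le_iff₀ hε] at hlog
  exact hlog

lemma ENNReal.mul_lt_of_le_mul_of_mul_le_inv_two {κ c m U : ℝ≥0∞} (hκc : κ * c ≤ 2⁻¹)
    (hc₀ : c ≠ 0) (hc : c ≠ ∞) (hm₀ : m ≠ 0) (hm : m ≠ ∞) (hmU : m ≤ c * U) : κ * m < U := by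
  rw [← ENNReal.mul_lt_mul_iff_right hc₀ hc]
  calc c * (κ * m) = κ * c * m := by ring
    _ ≤ 2⁻¹ * m := by gcongr
    _ < m := by rw [← ENNReal.div_eq_inv_mul]; exact ENNReal.half_lt_self hm₀ hm
    _ ≤ c * U := hmU

lemma ofReal_one_div_two_mul_pow_succ_mul_mul_lt {lam b : ℝ} {k : ℕ} {m U : ℝ≥0∞}
    (hlam : 1 ≤ lam) (hb : 0 < b) (hm₀ : m ≠ 0) (hm : m ≠ ∞)
    (hmU : m ≤ ENNReal.ofReal lam ^ k * ENNReal.ofReal b * U) :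
    ENNReal.ofReal (1 / (2 * lam ^ (k + 1) * b)) * m < U := by
  have hlam₀ : 0 < lam := by linarith
  refine ENNReal.mul_lt_of_le_mul_of_mul_le_inv_two ?_
    (mul_ne_zero (pow_ne_zero _ (ENNReal.ofReal_pos.2 hlam₀).ne') (ENNReal.ofReal_pos.2 hb).ne')
    (by finiteness) hm₀ hm hmU
  rw [← ENNReal.ofReal_pow hlam₀.le, ← ENNReal.ofReal_mul (by positivity),
    ← ENNReal.ofReal_mul (by positivity)]
  calc ENNReal.ofReal (1 / (2 * lam ^ (k + 1) * b) * (lam ^ k * b))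
      = ENNReal.ofReal (1 / (2 * lam)) := by rw [pow_succ]; field_simp
    _ ≤ ENNReal.ofReal 2⁻¹ := by
      apply ENNReal.ofReal_le_ofReal; rw [one_div]; gcongr; linarith
    _ = 2⁻¹ := by rw [ENNReal.ofReal_inv_of_pos two_pos, ENNReal.ofReal_ofNat]

section

variable {α ι : Type*} [MeasurableSpace α] {μ : Measure α}

lemma exists_finset_subset_lt_measure_biUnion [Countable ι] {s : ι → Set α} {u : Set ι}
    {c : ℝ≥0∞} (hc : c < μ (⋃ i ∈ u, s i)) : ∃ F : Finset ι, ↑F ⊆ u ∧ c < μ (⋃ i ∈ F, s i) := by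
  classical
  have hU : ⋃ i ∈ u, s i = ⋃ F : Finset u, ⋃ i ∈ F, s i := by
    refine subset_antisymm (iUnion₂_subset fun i hi => ?_) (iUnion_subset fun F => ?_)
    · exact subset_iUnion_of_subset {⟨i, hi⟩} (by simp)
    · exact iUnion₂_subset fun i _ => subset_biUnion_of_mem i.2
  have hdir : Directed (· ⊆ ·) fun F : Finset u => ⋃ i ∈ F, s i :=
    fun F F' => ⟨F ∪ F', biUnion_subset_biUnion_left (by simp),
      biUnion_subset_biUnion_left (by simp)⟩
  rw [hU, hdir.measure_iUnion, lt_iSup_iff] at hc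
  obtain ⟨F, hF⟩ := hc
  refine ⟨F.map (Function.Embedding.subtype _), by simp, ?_⟩
  simpa using hF

lemma measure_biUnion_le_mul_measure_biUnion [Countable ι] {s S : ι → Set α} {u : Set ι}
    (hd : u.PairwiseDisjoint s) (hs : ∀ i ∈ u, MeasurableSet (s i)) {c : ℝ≥0∞}
    (hsS : ∀ i ∈ u, μ (S i) ≤ c * μ (s i)) : μ (⋃ i ∈ u, S i) ≤ c * μ (⋃ i ∈ u, s i) :=
  calc μ (⋃ i ∈ u, S i) ≤ ∑' i : u, μ (S i) := measure_biUnion_le μ u.to_countable S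
    _ ≤ ∑' i : u, c * μ (s i) := ENNReal.tsum_le_tsum fun i => hsS i i.2
    _ = c * μ (⋃ i ∈ u, s i) := by
      rw [ENNReal.tsum_mul_left, measure_biUnion u.to_countable hd hs]

end

section

variable {Ω : Type*} [PseudoMetricSpace Ω] {x : ℕ → Ω} {r : ℕ → ℝ}

lemma limsup_ball_inter_ball_inter_subset (hr : Tendsto r atTop (nhds 0)) (y : Ω) (ρ : ℝ)
    (S : Set Ω) (G : ℕ) :
    limsup (fun i => ball (x i) (r i)) atTop ∩ ball y ρ ∩ S ⊆
      ⋃ i ∈ {i | G ≤ i ∧ ball (x i) (r i) ⊆ ball y ρ ∧ (ball (x i) (r i) ∩ S).Nonempty},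
        ball (x i) (r i) := by
  rintro w ⟨⟨hw, hwy⟩, hwS⟩
  rw [mem_limsup_iff_frequently_mem] at hw
  have hsmall : ∀ᶠ i in atTop, G ≤ i ∧ r i < (ρ - dist w y) / 2 :=
    (eventually_ge_atTop G).and (hr.eventually (gt_mem_nhds (by linarith [mem_ball.1 hwy])))
  obtain ⟨i, hwi, hGi, hri⟩ := (hw.and_eventually hsmall).exists
  refine mem_biUnion ⟨hGi, ball_subset_ball' ?_, w, hwi, hwS⟩ hwi
  linarith [mem_ball'.1 hwi, dist_triangle (x i) w y]

variable [MeasurableSpace Ω]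

def IsDoublingUpTo (μ : Measure Ω) (lam rd : ℝ) : Prop :=
  ∀ x ∈ measSupp μ, ∀ ρ : ℝ, 0 < ρ → ρ < rd →
    μ (ball x (2 * ρ)) ≤ ENNReal.ofReal lam * μ (ball x ρ)

lemma IsDoublingUpTo.measure_ball_two_pow_mul_le {μ : Measure Ω} {lam rd : ℝ}
    (hμ : IsDoublingUpTo μ lam rd) {z : Ω} (hz : z ∈ measSupp μ) {s : ℝ} (hs : 0 < s) :
    ∀ p : ℕ, 2 ^ p * s ≤ rd → μ (ball z (2 ^ p * s)) ≤ ENNReal.ofReal lam ^ p * μ (ball z s)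
  | 0, _ => by simp
  | p + 1, hp => by
    have hlt : 2 ^ p * s < rd := by
      refine lt_of_lt_of_le ?_ hp; rw [pow_succ]; nlinarith [pow_pos (two_pos : (0 : ℝ) < 2) p]
    calc μ (ball z (2 ^ (p + 1) * s)) = μ (ball z (2 * (2 ^ p * s))) := by ring_nf
      _ ≤ ENNReal.ofReal lam * μ (ball z (2 ^ p * s)) := hμ z hz _ (by positivity) hlt
      _ ≤ ENNReal.ofReal lam * (ENNReal.ofReal lam ^ p * μ (ball z s)) := by
        gcongr; exact hμ.measure_ball_two_pow_mul_le hz hs p hlt.le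
      _ = ENNReal.ofReal lam ^ (p + 1) * μ (ball z s) := by ring

lemma IsDoublingUpTo.measure_ball_mul_le {μ : Measure Ω} {lam rd : ℝ}
    (hμ : IsDoublingUpTo μ lam rd) {x z : Ω} {r R a b : ℝ} {k : ℕ}
    (hz : z ∈ ball x r ∩ measSupp μ) (ha : 1 < a) (hR : R + 1 ≤ 2 ^ k * (a - 1))
    (hrd : r ≤ rd / (2 ^ k * (a - 1)))
    (hdagger : μ (ball x (a * r)) ≤ ENNReal.ofReal b * μ (ball x r)) :
    μ (ball x (R * r)) ≤ ENNReal.ofReal lam ^ k * ENNReal.ofReal b * μ (ball x r) := by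
  obtain ⟨hzx, hz⟩ := hz
  have hr : 0 < r := dist_nonneg.trans_lt hzx
  have hs : 0 < (a - 1) * r := mul_pos (sub_pos.2 ha) hr
  have hks : 2 ^ k * ((a - 1) * r) ≤ rd := by
    rw [le_div_iff₀ (by positivity)] at hrd; linarith
  have hbig : ball x (R * r) ⊆ ball z (2 ^ k * ((a - 1) * r)) := by
    refine ball_subset_ball' ?_
    rw [dist_comm]
    nlinarith [mul_le_mul_of_nonneg_right hR hr.le, mem_ball.1 hzx]
  have hsmall : ball z ((a - 1) * r) ⊆ ball x (a * r) := by
    refine ball_subset_ball' ?_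
    linarith [mem_ball.1 hzx]
  calc μ (ball x (R * r)) ≤ μ (ball z (2 ^ k * ((a - 1) * r))) := measure_mono hbig
    _ ≤ ENNReal.ofReal lam ^ k * μ (ball z ((a - 1) * r)) :=
      hμ.measure_ball_two_pow_mul_le hz hs k hks
    _ ≤ ENNReal.ofReal lam ^ k * μ (ball x (a * r)) := by gcongr
    _ ≤ ENNReal.ofReal lam ^ k * (ENNReal.ofReal b * μ (ball x r)) := by gcongr
    _ = ENNReal.ofReal lam ^ k * ENNReal.ofReal b * μ (ball x r) := by ring

lemma measure_limsup_ball_diff_measSupp (μ : Measure Ω) (hr : Tendsto r atTop (nhds 0)) :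
    μ (limsup (fun i => ball (x i) (r i)) atTop \ measSupp μ) = 0 := by
  have hcover : limsup (fun i => ball (x i) (r i)) atTop \ measSupp μ ⊆
      ⋃ i ∈ {i | μ (ball (x i) (r i)) = 0}, ball (x i) (r i) := by
    rintro w ⟨hw, hwS⟩
    obtain ⟨ε, hε, hwε⟩ : ∃ ε > 0, μ (ball w ε) = 0 := by
      simpa [measSupp, pos_iff_ne_zero] using hwS
    rw [mem_limsup_iff_frequently_mem] at hw
    obtain ⟨i, hwi, hri⟩ := (hw.and_eventually (hr.eventually (gt_mem_nhds (half_pos hε)))).exists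
    refine mem_biUnion (measure_mono_null (ball_subset_ball' ?_) hwε) hwi
    linarith [mem_ball'.1 hwi]
  exact measure_mono_null hcover ((measure_biUnion_null_iff (to_countable _)).2 fun i hi => hi)

lemma measure_ball_le_measure_biUnion_of_limsup {μ : Measure Ω} (hr : Tendsto r atTop (nhds 0))
    {y : Ω} {ρ : ℝ} (hfull : μ (limsup (fun i => ball (x i) (r i)) atTop ∩ ball y ρ) = μ (ball y ρ))
    (G : ℕ) :
    μ (ball y ρ) ≤ μ (⋃ i ∈ {i | G ≤ i ∧ ball (x i) (r i) ⊆ ball y ρ ∧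
      (ball (x i) (r i) ∩ measSupp μ).Nonempty}, ball (x i) (r i)) := by
  set L := limsup (fun i => ball (x i) (r i)) atTop
  have hsplit : L ∩ ball y ρ ⊆ L ∩ ball y ρ ∩ measSupp μ ∪ L \ measSupp μ := by
    intro w hw; by_cases hwS : w ∈ measSupp μ
    exacts [Or.inl ⟨hw, hwS⟩, Or.inr ⟨hw.1, hwS⟩]
  calc μ (ball y ρ) = μ (L ∩ ball y ρ) := hfull.symm
    _ ≤ μ (L ∩ ball y ρ ∩ measSupp μ) + μ (L \ measSupp μ) :=
      (measure_mono hsplit).trans (measure_union_le _ _)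
    _ = μ (L ∩ ball y ρ ∩ measSupp μ) := by rw [measure_limsup_ball_diff_measSupp μ hr, add_zero]
    _ ≤ _ := measure_mono (limsup_ball_inter_ball_inter_subset hr y ρ _ G)

end

theorem full_on_balls_implies_finite_disjoint_subcollections_general
    {Ω : Type*} [MetricSpace Ω] [MeasurableSpace Ω] [BorelSpace Ω]
    (μ : Measure Ω) [IsProbabilityMeasure μ]
    (lam : ℝ) (hlam : 1 ≤ lam) (rd : ℝ) (hrd : 0 < rd)
    (hdoub : ∀ x ∈ measSupp μ, ∀ ρ : ℝ, 0 < ρ → ρ < rd →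
      μ (ball x (2 * ρ)) ≤ ENNReal.ofReal lam * μ (ball x ρ))
    (x : ℕ → Ω) (r : ℕ → ℝ)
    (hdiam : Tendsto r atTop (nhds 0))
    (a b : ℝ) (ha : 1 < a) (hb : 1 < b)
    (hdagger : ∀ᶠ i in atTop,
      μ (ball (x i) (a * r i)) ≤ ENNReal.ofReal b * μ (ball (x i) (r i)))
    (hfull : ∀ (z : Ω) (ρ : ℝ), 0 < ρ →
      μ (limsup (fun i => ball (x i) (r i)) atTop ∩ ball z ρ) = μ (ball z ρ)) :
    ∀ y ∈ measSupp μ, ∀ ρ : ℝ, 0 < ρ → ∀ G : ℕ,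
      ∃ F : Finset ℕ,
        (∀ i ∈ F, G ≤ i) ∧
        (∀ i ∈ F, ∀ j ∈ F, i ≠ j → Disjoint (ball (x i) (r i)) (ball (x j) (r j))) ∧
        (∀ i ∈ F, ball (x i) (r i) ⊆ ball y ρ) ∧
        ENNReal.ofReal
            (1 / (2 * lam ^ (max 1 (⌈Real.logb 2 (6 / (a - 1))⌉.toNat) + 1) * b)) *
            μ (ball y ρ)
          ≤ μ (⋃ i ∈ F, ball (x i) (r i)) := by
  intro y _ ρ hρ G
  set k := max 1 (⌈Real.logb 2 (6 / (a - 1))⌉.toNat)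
  rcases eq_or_ne (μ (ball y ρ)) 0 with hm₀ | hm₀
  · exact ⟨∅, by simp, by simp, by simp, by simp [hm₀]⟩
  have ha₁ : 0 < a - 1 := sub_pos.2 ha
  have hk : 6 ≤ 2 ^ k * (a - 1) :=
    le_two_pow_mul_of_ceil_logb_le (by norm_num) ha₁ (le_max_right _ _)
  have hδ : 0 < rd / (2 ^ k * (a - 1)) := by positivity
  obtain ⟨N, hN⟩ := eventually_atTop.1 (hdagger.and (hdiam.eventually (gt_mem_nhds hδ)))
  set t := {i | max G N ≤ i ∧ ball (x i) (r i) ⊆ ball y ρ ∧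
    (ball (x i) (r i) ∩ measSupp μ).Nonempty}
  obtain ⟨u, hut, hud, hu⟩ := Vitali.exists_disjoint_subfamily_covering_enlargement_ball t x r _
    (fun i hi => (hN i (le_of_max_le_right hi.1)).2.le) 5 (by norm_num)
  have henlarge : ∀ j ∈ u, μ (ball (x j) (5 * r j)) ≤
      ENNReal.ofReal lam ^ k * ENNReal.ofReal b * μ (ball (x j) (r j)) := fun j hj => by
    obtain ⟨hNj, -, z, hz⟩ := hut hj
    obtain ⟨hdagger_j, hr_j⟩ := hN j (le_of_max_le_right hNj)
    exact IsDoublingUpTo.measure_ball_mul_le hdoub hz ha (by linarith) hr_j.le hdagger_j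
  have hcover : μ (ball y ρ) ≤
      ENNReal.ofReal lam ^ k * ENNReal.ofReal b * μ (⋃ i ∈ u, ball (x i) (r i)) :=
    calc μ (ball y ρ) ≤ μ (⋃ i ∈ t, ball (x i) (r i)) :=
          measure_ball_le_measure_biUnion_of_limsup hdiam (hfull y ρ hρ) (max G N)
      _ ≤ μ (⋃ j ∈ u, ball (x j) (5 * r j)) := measure_mono <| iUnion₂_subset fun i hi =>
          let ⟨j, hj, hij⟩ := hu i hi
          hij.trans (subset_biUnion_of_mem (u := fun j => ball (x j) (5 * r j)) hj)
      _ ≤ _ := measure_biUnion_le_mul_measure_biUnion hud (fun _ _ => measurableSet_ball) henlarge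
  have hlarge := ofReal_one_div_two_mul_pow_succ_mul_mul_lt hlam (by linarith) hm₀
    (measure_ne_top μ _) hcover
  obtain ⟨F, hFu, hF⟩ := exists_finset_subset_lt_measure_biUnion hlarge
  exact ⟨F, fun i hi => le_of_max_le_left (hut (hFu hi)).1,
    fun i hi j hj hij => hud (hFu hi) (hFu hj) hij, fun i hi => (hut (hFu hi)).2.1, hF.le⟩

/-- **Proposition 1, (B) ⇒ (C).** Let `μ` be a doubling Borel probability measure with
doubling constant `lam`, and `B i = ball (x i) (r i)` a sequence of balls with radii tending
to `0` satisfying condition (†) with constants `a, b > 1`.  If `μ(limsup Bᵢ ∩ B) = μ(B)` for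
every ball `B`, then within any ball `B` centred in the support of `μ` and for any `G` one can
find a finite disjoint subcollection of `{B i : i ≥ G}` of balls contained in `B` whose union
has measure at least `κ μ(B)`, where `κ = 1/(2 lam^(k+1) b)` and
`k = max {1, ⌈log₂(6/(a-1))⌉}`. -/
theorem full_on_balls_implies_finite_disjoint_subcollections
    {Ω : Type*} [MetricSpace Ω] [MeasurableSpace Ω] [BorelSpace Ω]
    (μ : Measure Ω) [IsProbabilityMeasure μ]
    (lam : ℝ) (hlam : 1 ≤ lam) (rd : ℝ) (hrd : 0 < rd)
    (hdoub : ∀ x ∈ measSupp μ, ∀ ρ : ℝ, 0 < ρ → ρ < rd →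
      μ (ball x (2 * ρ)) ≤ ENNReal.ofReal lam * μ (ball x ρ))
    (x : ℕ → Ω) (r : ℕ → ℝ) (hr : ∀ i, 0 < r i)
    (hdiam : Tendsto r atTop (nhds 0))
    (a b : ℝ) (ha : 1 < a) (hb : 1 < b)
    (hdagger : ∀ᶠ i in atTop,
      μ (ball (x i) (a * r i)) ≤ ENNReal.ofReal b * μ (ball (x i) (r i)))
    (hfull : ∀ (z : Ω) (ρ : ℝ), 0 < ρ →
      μ (limsup (fun i => ball (x i) (r i)) atTop ∩ ball z ρ) = μ (ball z ρ)) :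
    ∀ y ∈ measSupp μ, ∀ ρ : ℝ, 0 < ρ → ∀ G : ℕ,
      ∃ F : Finset ℕ,
        (∀ i ∈ F, G ≤ i) ∧
        (∀ i ∈ F, ∀ j ∈ F, i ≠ j → Disjoint (ball (x i) (r i)) (ball (x j) (r j))) ∧
        (∀ i ∈ F, ball (x i) (r i) ⊆ ball y ρ) ∧
        ENNReal.ofReal
            (1 / (2 * lam ^ (max 1 (⌈Real.logb 2 (6 / (a - 1))⌉.toNat) + 1) * b)) *
            μ (ball y ρ)
          ≤ μ (⋃ i ∈ F, ball (x i) (r i)) :=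
  full_on_balls_implies_finite_disjoint_subcollections_general μ lam hlam rd hrd hdoub x r hdiam a b
    ha hb hdagger hfull
end

section
/- Let (Ω, 𝒜, μ, d) be a metric measure space with a Borel probability measure μ, let {B_i}_{i∈ℕ} be a sequence of balls in Ω, let B be a ball centred in supp μ, and let κ > 0 be a constant. Suppose that for every G ∈ ℕ there is a finite subcollection 𝒦_{G,B} ⊆ {B_i : i ≥ G} of pairwise disjoint balls contained in B such that, writing E_{G,B} := ⋃_{L∈𝒦_{G,B}} L, one has μ(E_{G,B}) ≥ κ μ(B) and μ(E_{G,B} ∩ E_{G',B}) ≤ (1/(μ(B) κ²)) μ(E_{G,B}) μ(E_{G',B}) for all G, G' ∈ ℕ. Then there is a subsequence {L_{i,B}}_{i∈ℕ} of {B_i}_{i∈ℕ} of balls contained in B with ∑_{i=1}^∞ μ(L_{i,B}) = ∞ and, for infinitely many Q ∈ ℕ, ∑_{s,t=1}^Q μ(L_{s,B} ∩ L_{t,B}) ≤ (1/(μ(B) κ²)) (∑_{s=1}^Q μ(L_{s,B}))². -/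
/-!
Take generations `G₀ = 0`, `Gₙ₊₁ = 1 + max 𝒦_{Gₙ}`. Since `𝒦_G` only uses indices `≥ G`, the
blocks `𝒦_{Gₙ}` lie in the disjoint consecutive intervals `[Gₙ, Gₙ₊₁)`, and the subsequence is
the increasing enumeration of their union. For `Q` the number of indices in the first `N` blocks,
the sums over `L_1, …, L_Q` regroup block by block. As the balls of one block are disjoint and
measurable, `∑ μ(L_s) = ∑_{n<N} μ(E_{Gₙ}) ≥ N κ μ(B)`, which diverges, and
`∑_{s,t} μ(L_s ∩ L_t) = ∑_{n,m<N} μ(E_{Gₙ} ∩ E_{Gₘ})`, to which the pairwise hypothesis applies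
termwise.
-/

open MeasureTheory Filter Set Metric
open scoped ENNReal

section Blocks

open Finset Function

variable {A : ℕ → Finset ℕ} {G : ℕ → ℕ}

theorem exists_seq_subset_Ico (K : ℕ → Finset ℕ) (hK : ∀ G, ∀ i ∈ K G, G ≤ i) :
    ∃ G : ℕ → ℕ, ∀ n, ↑(K (G n)) ⊆ Set.Ico (G n) (G (n + 1)) := by
  set next : ℕ → ℕ := fun g => (K g).sup id + 1
  refine ⟨fun n => next^[n] 0, fun n j hj => ⟨hK _ j hj, ?_⟩⟩
  change j < next^[n + 1] 0
  rw [Function.iterate_succ_apply']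
  exact Nat.lt_succ_of_le (le_sup (f := id) hj)

theorem strictMono_of_subset_Ico (hA : ∀ n, ↑(A n) ⊆ Set.Ico (G n) (G (n + 1)))
    (hne : ∀ n, (A n).Nonempty) : StrictMono G :=
  strictMono_nat_of_lt_succ fun n =>
    let ⟨_, hj⟩ := hne n
    (hA n hj).1.trans_lt (hA n hj).2

theorem pairwise_disjoint_of_subset_Ico (hA : ∀ n, ↑(A n) ⊆ Set.Ico (G n) (G (n + 1)))
    (hG : Monotone G) : Pairwise (Disjoint on A) :=
  (pairwise_disjoint_on A).2 fun n m hnm => disjoint_left.2 fun _ hjn hjm =>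
    ((hA n hjn).2.trans_le ((hG hnm).trans (hA m hjm).1)).false

theorem mem_biUnion_range_iff_of_subset_Ico (hA : ∀ n, ↑(A n) ⊆ Set.Ico (G n) (G (n + 1)))
    (hG : Monotone G) {N j : ℕ} :
    j ∈ (range N).biUnion A ↔ (∃ n, j ∈ A n) ∧ j < G N := by
  simp only [Finset.mem_biUnion, Finset.mem_range]
  constructor
  · rintro ⟨n, hn, hj⟩
    exact ⟨⟨n, hj⟩, (hA n hj).2.trans_le (hG hn)⟩
  · rintro ⟨⟨n, hj⟩, hjN⟩
    refine ⟨n, lt_of_not_ge fun hNn => ?_, hj⟩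
    exact (hjN.trans_le ((hG hNn).trans (hA n hj).1)).false

theorem le_card_biUnion_range_of_subset_Ico (hA : ∀ n, ↑(A n) ⊆ Set.Ico (G n) (G (n + 1)))
    (hne : ∀ n, (A n).Nonempty) (N : ℕ) : N ≤ #((range N).biUnion A) := by
  have hdisj := pairwise_disjoint_of_subset_Ico hA (strictMono_of_subset_Ico hA hne).monotone
  rw [card_biUnion (hdisj.set_pairwise _)]
  simpa using card_nsmul_le_sum (range N) (fun n => #(A n)) 1 fun n _ => (hne n).card_pos

theorem exists_strictMono_image_range_eq_biUnion (hA : ∀ n, ↑(A n) ⊆ Set.Ico (G n) (G (n + 1)))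
    (hne : ∀ n, (A n).Nonempty) :
    ∃ φ : ℕ → ℕ, StrictMono φ ∧ (∀ i, ∃ n, φ i ∈ A n) ∧
      ∀ N, ∃ Q, N ≤ Q ∧ (range Q).image φ = (range N).biUnion A := by
  classical
  have hGs := strictMono_of_subset_Ico hA hne
  set p : ℕ → Prop := fun j => ∃ n, j ∈ A n
  have hp : (Set.ofPred p).Infinite := Set.infinite_of_forall_exists_gt fun a =>
    let ⟨j, hj⟩ := hne (a + 1)
    ⟨j, ⟨a + 1, hj⟩, Nat.lt_of_succ_le (hGs.le_apply.trans (hA _ hj).1)⟩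
  have hφ := Nat.nth_strictMono hp
  have himage : ∀ N, (range (Nat.count p (G N))).image (Nat.nth p) = (range N).biUnion A := by
    intro N
    ext j
    rw [mem_biUnion_range_iff_of_subset_Ico hA hGs.monotone, Finset.mem_image]
    constructor
    · rintro ⟨s, hs, rfl⟩
      exact ⟨Nat.nth_mem_of_infinite hp s, Nat.nth_lt_of_lt_count (Finset.mem_range.1 hs)⟩
    · rintro ⟨hj, hjN⟩
      exact ⟨Nat.count p j, Finset.mem_range.2 (Nat.count_strict_mono hj hjN), Nat.nth_count hj⟩
  refine ⟨Nat.nth p, hφ, Nat.nth_mem_of_infinite hp, fun N => ⟨_, ?_, himage N⟩⟩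
  calc N ≤ #((range N).biUnion A) := le_card_biUnion_range_of_subset_Ico hA hne N
    _ = Nat.count p (G N) := by
      rw [← himage, Finset.card_image_of_injective _ hφ.injective, card_range]

end Blocks

theorem ENNReal.tsum_eq_top_of_forall_nat_mul_le_sum {f : ℕ → ℝ≥0∞} {ε : ℝ≥0∞} (hε : ε ≠ 0)
    (h : ∀ N : ℕ, ∃ Q, N * ε ≤ ∑ i ∈ Finset.range Q, f i) : ∑' i, f i = ⊤ := by
  by_contra hf
  obtain ⟨N, hN⟩ := ENNReal.exists_nat_mul_gt hε hf
  obtain ⟨Q, hQ⟩ := h N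
  exact (hQ.trans (ENNReal.sum_le_tsum _)).not_gt hN

section BlockMeasures

open Finset Function

variable {α ι κ : Type*} [MeasurableSpace α] (μ : Measure α)

theorem measure_biUnion_inter_biUnion_finset {s t : ι → Set α} {I J : Finset ι}
    (hsd : (I : Set ι).PairwiseDisjoint s) (htd : (J : Set ι).PairwiseDisjoint t)
    (hs : ∀ i ∈ I, MeasurableSet (s i)) (ht : ∀ j ∈ J, MeasurableSet (t j)) :
    μ ((⋃ i ∈ I, s i) ∩ ⋃ j ∈ J, t j) = ∑ i ∈ I, ∑ j ∈ J, μ (s i ∩ t j) := by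
  rw [Set.iUnion₂_inter, measure_biUnion_finset (hsd.mono fun _ => inter_subset_left)
    fun i hi => (hs i hi).inter (J.measurableSet_biUnion ht)]
  refine Finset.sum_congr rfl fun i hi => ?_
  rw [Set.inter_iUnion₂, measure_biUnion_finset (htd.mono fun _ => inter_subset_right)
    fun j hj => (hs i hi).inter (ht j hj)]

variable [DecidableEq ι] {s : ι → Set α} {A : κ → Finset ι}

theorem sum_measure_biUnion_blocks (hs : ∀ i, MeasurableSet (s i))
    (hA : Pairwise (Disjoint on A)) (hsA : ∀ n, (A n : Set ι).PairwiseDisjoint s) (I : Finset κ) :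
    ∑ j ∈ I.biUnion A, μ (s j) = ∑ n ∈ I, μ (⋃ j ∈ A n, s j) := by
  rw [sum_biUnion (hA.set_pairwise _)]
  exact Finset.sum_congr rfl fun n _ => (measure_biUnion_finset (hsA n) fun j _ => hs j).symm

theorem sum_sum_measure_inter_biUnion_blocks (hs : ∀ i, MeasurableSet (s i))
    (hA : Pairwise (Disjoint on A)) (hsA : ∀ n, (A n : Set ι).PairwiseDisjoint s) (I : Finset κ) :
    ∑ j ∈ I.biUnion A, ∑ k ∈ I.biUnion A, μ (s j ∩ s k) =
      ∑ n ∈ I, ∑ m ∈ I, μ ((⋃ j ∈ A n, s j) ∩ ⋃ k ∈ A m, s k) := by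
  simp only [sum_biUnion (hA.set_pairwise _)]
  refine Finset.sum_congr rfl fun n _ => ?_
  rw [Finset.sum_comm]
  refine Finset.sum_congr rfl fun m _ => ?_
  rw [measure_biUnion_inter_biUnion_finset μ (hsA n) (hsA m) (fun j _ => hs j) fun k _ => hs k]

theorem sum_sum_measure_inter_le_of_blocks (hs : ∀ i, MeasurableSet (s i))
    (hA : Pairwise (Disjoint on A)) (hsA : ∀ n, (A n : Set ι).PairwiseDisjoint s) {c : ℝ≥0∞}
    (hpair : ∀ n m, μ ((⋃ j ∈ A n, s j) ∩ ⋃ k ∈ A m, s k) ≤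
      c * (μ (⋃ j ∈ A n, s j) * μ (⋃ k ∈ A m, s k))) (I : Finset κ) :
    ∑ j ∈ I.biUnion A, ∑ k ∈ I.biUnion A, μ (s j ∩ s k) ≤
      c * (∑ j ∈ I.biUnion A, μ (s j)) ^ 2 :=
  calc ∑ j ∈ I.biUnion A, ∑ k ∈ I.biUnion A, μ (s j ∩ s k)
      = ∑ n ∈ I, ∑ m ∈ I, μ ((⋃ j ∈ A n, s j) ∩ ⋃ k ∈ A m, s k) :=
        sum_sum_measure_inter_biUnion_blocks μ hs hA hsA I
    _ ≤ ∑ n ∈ I, ∑ m ∈ I, c * (μ (⋃ j ∈ A n, s j) * μ (⋃ k ∈ A m, s k)) :=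
        sum_le_sum fun n _ => sum_le_sum fun m _ => hpair n m
    _ = c * (∑ j ∈ I.biUnion A, μ (s j)) ^ 2 := by
        rw [sum_measure_biUnion_blocks μ hs hA hsA, sq, sum_mul_sum, mul_sum]
        simp only [mul_sum]

end BlockMeasures

theorem pairwise_quasi_independence_implies_subsequence_general
    {Ω : Type*} [MetricSpace Ω] [MeasurableSpace Ω] [BorelSpace Ω]
    (μ : Measure Ω)
    (x : ℕ → Ω) (r : ℕ → ℝ)
    (y : Ω) (hy : y ∈ measSupp μ) (ρ : ℝ) (hρ : 0 < ρ)
    (κ : ℝ) (hκ : 0 < κ)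
    (K : ℕ → Finset ℕ)
    (hK : ∀ G : ℕ,
      (∀ i ∈ K G, G ≤ i) ∧
      (∀ i ∈ K G, ∀ j ∈ K G, i ≠ j → Disjoint (ball (x i) (r i)) (ball (x j) (r j))) ∧
      (∀ i ∈ K G, ball (x i) (r i) ⊆ ball y ρ) ∧
      ENNReal.ofReal κ * μ (ball y ρ) ≤ μ (⋃ i ∈ K G, ball (x i) (r i)))
    (hKpair : ∀ G G' : ℕ,
      μ ((⋃ i ∈ K G, ball (x i) (r i)) ∩ ⋃ i ∈ K G', ball (x i) (r i))
        ≤ (μ (ball y ρ) * ENNReal.ofReal (κ ^ 2))⁻¹ *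
            (μ (⋃ i ∈ K G, ball (x i) (r i)) * μ (⋃ i ∈ K G', ball (x i) (r i)))) :
    ∃ φ : ℕ → ℕ, StrictMono φ ∧
      (∀ i, ball (x (φ i)) (r (φ i)) ⊆ ball y ρ) ∧
      (∑' i, μ (ball (x (φ i)) (r (φ i))) = ⊤) ∧
      ∃ᶠ Q in atTop,
        ∑ s ∈ Finset.range Q, ∑ t ∈ Finset.range Q,
            μ (ball (x (φ s)) (r (φ s)) ∩ ball (x (φ t)) (r (φ t)))
          ≤ (μ (ball y ρ) * ENNReal.ofReal (κ ^ 2))⁻¹ *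
              (∑ s ∈ Finset.range Q, μ (ball (x (φ s)) (r (φ s)))) ^ 2 := by
  classical
  have hε : ENNReal.ofReal κ * μ (ball y ρ) ≠ 0 :=
    mul_ne_zero (ENNReal.ofReal_pos.2 hκ).ne' (hy ρ hρ).ne'
  have hKne : ∀ G, (K G).Nonempty := fun G =>
    Finset.nonempty_iff_ne_empty.2 fun h => hε (by simpa [h] using (hK G).2.2.2)
  obtain ⟨G, hG⟩ := exists_seq_subset_Ico K fun G => (hK G).1
  obtain ⟨φ, hφ, hφK, hφQ⟩ := exists_strictMono_image_range_eq_biUnion hG fun n => hKne (G n)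
  have hdisj := pairwise_disjoint_of_subset_Ico hG
    (strictMono_of_subset_Ico hG fun n => hKne (G n)).monotone
  have hballs : ∀ n, (K (G n) : Set ℕ).PairwiseDisjoint fun i => ball (x i) (r i) :=
    fun n i hi j hj => (hK (G n)).2.1 i hi j hj
  have hmeas : ∀ i, MeasurableSet (ball (x i) (r i)) := fun i => measurableSet_ball
  refine ⟨φ, hφ, fun i => ?_, ?_, ?_⟩
  · obtain ⟨n, hn⟩ := hφK i
    exact (hK (G n)).2.2.1 _ hn
  · refine ENNReal.tsum_eq_top_of_forall_nat_mul_le_sum hε fun N => ?_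
    obtain ⟨Q, -, hQ⟩ := hφQ N
    refine ⟨Q, ?_⟩
    rw [← Finset.sum_image (f := fun j => μ (ball (x j) (r j))) hφ.injective.injOn, hQ,
      sum_measure_biUnion_blocks μ hmeas hdisj hballs]
    simpa using Finset.card_nsmul_le_sum (Finset.range N) _ _ fun n _ => (hK (G n)).2.2.2
  · refine frequently_atTop.2 fun M => ?_
    obtain ⟨Q, hMQ, hQ⟩ := hφQ M
    refine ⟨Q, hMQ, ?_⟩
    have := sum_sum_measure_inter_le_of_blocks μ hmeas hdisj hballs (fun n m => hKpair _ _)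
      (Finset.range M)
    rw [← hQ] at this
    simpa only [Finset.sum_image hφ.injective.injOn] using this

/-- **Proposition 1, (C) & (D) ⇒ (E).** Fix a ball `B = ball y ρ` centred in the support of
`μ`.  Suppose for every `G` the finite index set `K G ⊆ {i : i ≥ G}` picks out pairwise
disjoint balls contained in `B` whose union `E_G` satisfies `μ(E_G) ≥ κ μ(B)` and
`μ(E_G ∩ E_{G'}) ≤ (μ(B) κ²)⁻¹ μ(E_G) μ(E_{G'})` for all `G, G'`.  Then there is a subsequence
of the balls `B i` contained in `B` whose measures sum to infinity and which is
quasi-independent on average with constant `(μ(B) κ²)⁻¹`. -/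
theorem pairwise_quasi_independence_implies_subsequence
    {Ω : Type*} [MetricSpace Ω] [MeasurableSpace Ω] [BorelSpace Ω]
    (μ : Measure Ω) [IsProbabilityMeasure μ]
    (x : ℕ → Ω) (r : ℕ → ℝ) (hr : ∀ i, 0 < r i)
    (y : Ω) (hy : y ∈ measSupp μ) (ρ : ℝ) (hρ : 0 < ρ)
    (κ : ℝ) (hκ : 0 < κ)
    (K : ℕ → Finset ℕ)
    (hK : ∀ G : ℕ,
      (∀ i ∈ K G, G ≤ i) ∧
      (∀ i ∈ K G, ∀ j ∈ K G, i ≠ j → Disjoint (ball (x i) (r i)) (ball (x j) (r j))) ∧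
      (∀ i ∈ K G, ball (x i) (r i) ⊆ ball y ρ) ∧
      ENNReal.ofReal κ * μ (ball y ρ) ≤ μ (⋃ i ∈ K G, ball (x i) (r i)))
    (hKpair : ∀ G G' : ℕ,
      μ ((⋃ i ∈ K G, ball (x i) (r i)) ∩ ⋃ i ∈ K G', ball (x i) (r i))
        ≤ (μ (ball y ρ) * ENNReal.ofReal (κ ^ 2))⁻¹ *
            (μ (⋃ i ∈ K G, ball (x i) (r i)) * μ (⋃ i ∈ K G', ball (x i) (r i)))) :
    ∃ φ : ℕ → ℕ, StrictMono φ ∧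
      (∀ i, ball (x (φ i)) (r (φ i)) ⊆ ball y ρ) ∧
      (∑' i, μ (ball (x (φ i)) (r (φ i))) = ⊤) ∧
      ∃ᶠ Q in atTop,
        ∑ s ∈ Finset.range Q, ∑ t ∈ Finset.range Q,
            μ (ball (x (φ s)) (r (φ s)) ∩ ball (x (φ t)) (r (φ t)))
          ≤ (μ (ball y ρ) * ENNReal.ofReal (κ ^ 2))⁻¹ *
              (∑ s ∈ Finset.range Q, μ (ball (x (φ s)) (r (φ s)))) ^ 2 :=
  pairwise_quasi_independence_implies_subsequence_general μ x r y hy ρ hρ κ hκ K hK hKpair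
end

section
/- Let (Ω, 𝒜, μ, d) be a metric measure space equipped with a Borel probability measure μ, let E be a Borel subset of Ω, and let f : (0,∞) → (0,∞) be an increasing function with f(x) → 0 as x → 0. Assume that μ(E ∩ A) ≥ f(μ(A)) for every open subset A ⊆ Ω with μ(A) > 0. Then μ(E) = 1. -/
open MeasureTheory Filter Set
open scoped ENNReal

/-! If `μ Eᶜ > 0`, outer regularity gives an open `A ⊇ Eᶜ` in which `E` has measure
less than `f (μ Eᶜ)`, while the hypothesis and monotonicity of `f` force
`μ (E ∩ A) ≥ f (μ A) ≥ f (μ Eᶜ)`. -/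

theorem MeasurableSet.exists_isOpen_superset_compl_measure_inter_lt
    {α : Type*} [TopologicalSpace α] [MeasurableSpace α] (μ : Measure α) [μ.OuterRegular]
    {E : Set α} (hE : MeasurableSet E) (hEc : μ Eᶜ ≠ ∞) {ε : ℝ≥0∞} (hε : ε ≠ 0) :
    ∃ A, IsOpen A ∧ Eᶜ ⊆ A ∧ μ (E ∩ A) < ε := by
  obtain ⟨A, hEcA, hA, -, hsmall⟩ := hE.compl.exists_isOpen_sdiff_lt hEc hε
  refine ⟨A, hA, hEcA, ?_⟩
  rwa [sdiff_compl, inter_comm] at hsmall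

theorem full_measure_of_open_density_general
    {Ω : Type*} [MetricSpace Ω] [MeasurableSpace Ω] [BorelSpace Ω]
    (μ : Measure Ω) [IsProbabilityMeasure μ]
    (E : Set Ω) (hEmeas : MeasurableSet E)
    (f : ℝ → ℝ)
    (hf_pos : ∀ x : ℝ, 0 < x → 0 < f x)
    (hf_mono : MonotoneOn f (Set.Ioi (0 : ℝ)))
    (h : ∀ A : Set Ω, IsOpen A → 0 < μ A →
      ENNReal.ofReal (f (μ A).toReal) ≤ μ (E ∩ A)) :
    μ E = 1 := by
  by_contra hE
  have hEc : 0 < μ Eᶜ := pos_iff_ne_zero.2 fun h0 => hE ((prob_compl_eq_zero_iff hEmeas).1 h0)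
  have hEc_real : 0 < (μ Eᶜ).toReal := ENNReal.toReal_pos hEc.ne' (measure_ne_top μ _)
  obtain ⟨A, hA, hEcA, hsmall⟩ := hEmeas.exists_isOpen_superset_compl_measure_inter_lt μ
    (measure_ne_top μ _) (ENNReal.ofReal_pos.2 (hf_pos _ hEc_real)).ne'
  have hμA : (μ Eᶜ).toReal ≤ (μ A).toReal :=
    ENNReal.toReal_mono (measure_ne_top μ _) (measure_mono hEcA)
  have hf_le : f (μ Eᶜ).toReal ≤ f (μ A).toReal :=
    hf_mono hEc_real (hEc_real.trans_le hμA) hμA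
  have hlarge := h A hA (hEc.trans_le (measure_mono hEcA))
  exact (hlarge.trans_lt hsmall).not_ge (ENNReal.ofReal_le_ofReal hf_le)

/-- **Full measure criterion for open sets (Lemma 6 of [BDV06]).** Let `μ` be a Borel
probability measure on a metric space, `E` a Borel set and `f : (0,∞) → (0,∞)` an increasing
function with `f(x) → 0` as `x → 0`.  If `μ(E ∩ A) ≥ f(μ(A))` for every open set `A` with
`μ(A) > 0`, then `μ(E) = 1`. -/
theorem full_measure_of_open_density
    {Ω : Type*} [MetricSpace Ω] [MeasurableSpace Ω] [BorelSpace Ω]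
    (μ : Measure Ω) [IsProbabilityMeasure μ]
    (E : Set Ω) (hEmeas : MeasurableSet E)
    (f : ℝ → ℝ)
    (hf_pos : ∀ x : ℝ, 0 < x → 0 < f x)
    (hf_mono : MonotoneOn f (Set.Ioi (0 : ℝ)))
    (hf_lim : Tendsto f (nhdsWithin 0 (Set.Ioi (0 : ℝ))) (nhds 0))
    (h : ∀ A : Set Ω, IsOpen A → 0 < μ A →
      ENNReal.ofReal (f (μ A).toReal) ≤ μ (E ∩ A)) :
    μ E = 1 :=
  full_measure_of_open_density_general μ E hEmeas f hf_pos hf_mono h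
end
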